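/- For every integer m ≥ 1, the tetrahedron T_{m, m², m³+1} is a clean lattice tetrahedron and its lattice width equals m. -/

import Mathlib

open scoped BigOperators

/-- A point of `ℝ³` is a lattice point if every coordinate is an integer. -/
def IsLatticePoint (x : Fin 3 → ℝ) : Prop := ∀ i, ∃ z : ℤ, x i = (z : ℝ)

/-- Four lattice points of `ℝ³` that are not coplanar: the vertex map of a lattice tetrahedron. -/
def IsLatticeTet (v : Fin 4 → Fin 3 → ℝ) : Prop :=
  (∀ j, IsLatticePoint (v j)) ∧ AffineIndependent ℝ v

/-- The solid tetrahedron spanned by the four vertices. -/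
def tetSet (v : Fin 4 → Fin 3 → ℝ) : Set (Fin 3 → ℝ) := convexHull ℝ (Set.range v)

/-- A lattice tetrahedron is clean if the only lattice points on its boundary are its vertices. -/
def CleanTet (v : Fin 4 → Fin 3 → ℝ) : Prop :=
  ∀ x ∈ frontier (tetSet v), IsLatticePoint x → x ∈ Set.range v

/-- The affine map `x ↦ M x + u` determined by an integer matrix `M` and integer vector `u`. -/
noncomputable def affMap (M : Matrix (Fin 3) (Fin 3) ℤ) (u : Fin 3 → ℤ) (x : Fin 3 → ℝ) :
    Fin 3 → ℝ :=
  fun i => (∑ j, (M i j : ℝ) * x j) + (u i : ℝ)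

/-- Two lattice tetrahedra are equivalent if an affine unimodular map carries the vertex set of
one onto the vertex set of the other. -/
def TetEquiv (v v' : Fin 4 → Fin 3 → ℝ) : Prop :=
  ∃ M : Matrix (Fin 3) (Fin 3) ℤ, (M.det = 1 ∨ M.det = -1) ∧
    ∃ u : Fin 3 → ℤ, affMap M u '' Set.range v = Set.range v'

/-- The tetrahedron `T_{a,b,n}` with vertices `(0,0,0)`, `(1,0,0)`, `(0,1,0)`, `(a,b,n)`. -/
noncomputable def stdTet (a b n : ℤ) : Fin 4 → Fin 3 → ℝ :=
  ![![0, 0, 0], ![1, 0, 0], ![0, 1, 0], ![(a : ℝ), (b : ℝ), (n : ℝ)]]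

/-- The number `i(T)` of lattice points interior to the tetrahedron. -/
noncomputable def interiorLatticeCount (v : Fin 4 → Fin 3 → ℝ) : ℕ :=
  Set.ncard {x : Fin 3 → ℝ | x ∈ interior (tetSet v) ∧ IsLatticePoint x}

/-- A 1-point lattice tetrahedron: clean, with exactly one interior lattice point. -/
def OnePointTet (v : Fin 4 → Fin 3 → ℝ) : Prop :=
  IsLatticeTet v ∧ CleanTet v ∧
    ∃! w : Fin 3 → ℝ, w ∈ interior (tetSet v) ∧ IsLatticePoint w

/-- An empty tetrahedron: no lattice points in the interior. -/
def IsEmptyTet (v : Fin 4 → Fin 3 → ℝ) : Prop :=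
  ∀ x ∈ interior (tetSet v), ¬ IsLatticePoint x

/-- A quadruple `(d₁,d₂,d₃,d₄)` of positive integers is ripe if, with `N = ∑ dⱼ`:
(i) each `gcd(dⱼ, N) = 1`; (ii) each `dᵢ` divides the sum of two of the other three;
(iii) `dⱼ = dᵢ` (for `j ≠ i`) or `dⱼ = 2 dᵢ` forces `dᵢ = 1`. -/
def Ripe (d : Fin 4 → ℤ) : Prop :=
  (∀ j, 0 < d j) ∧
  (∀ j, Int.gcd (d j) (∑ i, d i) = 1) ∧
  (∀ i, ∃ j k, j ≠ i ∧ k ≠ i ∧ j ≠ k ∧ d i ∣ (d j + d k)) ∧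
  (∀ i j, ((j ≠ i ∧ d j = d i) ∨ d j = 2 * d i) → d i = 1)

/-- The `u`-width of a set `S ⊆ ℝ³`: `max {u·x : x ∈ S} - min {u·x : x ∈ S}`. -/
noncomputable def uWidth (S : Set (Fin 3 → ℝ)) (u : Fin 3 → ℤ) : ℝ :=
  sSup ((fun x => ∑ i, (u i : ℝ) * x i) '' S) - sInf ((fun x => ∑ i, (u i : ℝ) * x i) '' S)

/-- The lattice width of a set: the minimum of its `u`-widths over nonzero integer `u`. -/
noncomputable def latticeWidth (S : Set (Fin 3 → ℝ)) : ℝ :=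
  sInf {w : ℝ | ∃ u : Fin 3 → ℤ, u ≠ 0 ∧ uWidth S u = w}

section aux


open Finset Set

lemma my_mem_tetSet_iff (v : Fin 4 → Fin 3 → ℝ) (x : Fin 3 → ℝ) :
    x ∈ tetSet v ↔ ∃ c : Fin 4 → ℝ, (∀ i, 0 ≤ c i) ∧ ∑ i, c i = 1 ∧ ∑ i, c i • v i = x := by
  rw [tetSet, convexHull_range_eq_exists_affineCombination]
  constructor
  · rintro ⟨s, w, h0, h1, rfl⟩
    refine ⟨fun i => if i ∈ s then w i else 0, fun i => ?_, ?_, ?_⟩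
    · by_cases h : i ∈ s <;> simp [h]; exact h0 i h
    · rw [Finset.sum_ite_mem, Finset.univ_inter, h1]
    · rw [s.affineCombination_eq_linear_combination v w h1]
      rw [show (∑ i : Fin 4, (if i ∈ s then w i else 0) • v i) = ∑ i ∈ s, w i • v i from by
        rw [← Finset.sum_subset (Finset.subset_univ s) (fun i _ hi => by simp [hi])]
        exact Finset.sum_congr rfl fun i hi => by simp [hi]]
  · rintro ⟨c, h0, h1, rfl⟩
    exact ⟨Finset.univ, c, fun i _ => h0 i, h1,
      Finset.univ.affineCombination_eq_linear_combination v c h1⟩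

lemma my_coprime1 (m : ℤ) : IsCoprime (m ^ 3 + 1) m := ⟨1, -m ^ 2, by ring⟩

lemma my_coprime2 (m : ℤ) (hm : 1 ≤ m) : IsCoprime (m ^ 3 + 1) (m ^ 2 + m - 1) := by
  rw [Int.isCoprime_iff_gcd_eq_one]
  set d := Int.gcd (m ^ 3 + 1) (m ^ 2 + m - 1) with hd
  have h1 : (d : ℤ) ∣ m ^ 3 + 1 := Int.gcd_dvd_left _ _
  have h2 : (d : ℤ) ∣ m ^ 2 + m - 1 := Int.gcd_dvd_right _ _
  have h3 : (d : ℤ) ∣ 2 * m := by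
    have := dvd_sub h1 (h2.mul_left (m - 1))
    have e : m ^ 3 + 1 - (m - 1) * (m ^ 2 + m - 1) = 2 * m := by ring
    rwa [e] at this
  have h4 : (d : ℤ) ∣ 2 := by
    have := dvd_sub (h3.mul_left (m + 1)) (h2.mul_left 2)
    have e : (m + 1) * (2 * m) - 2 * (m ^ 2 + m - 1) = 2 := by ring
    rwa [e] at this
  have hodd : ¬ (2 : ℤ) ∣ (m ^ 2 + m - 1) := by
    have : Even (m * (m + 1)) := Int.even_mul_succ_self m
    obtain ⟨k, hk⟩ := this
    intro ⟨j, hj⟩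
    have e : m * (m + 1) = m ^ 2 + m := by ring
    omega
  have hd2 : d ∣ 2 := by exact_mod_cast h4
  have hdle : d ≤ 2 := Nat.le_of_dvd (by norm_num) hd2
  have hd0 : d ≠ 0 := by
    intro h
    rw [hd] at h
    rw [Int.gcd_eq_zero_iff] at h
    nlinarith [h.1]
  have : d = 1 ∨ d = 2 := by omega
  rcases this with h | h
  · exact h
  · rw [h] at h2
    exact absurd (by exact_mod_cast h2) hodd

lemma my_t01 {n t : ℤ} (hn : 0 < n) (h0 : 0 ≤ n * t) (h1 : n * t ≤ n) : t = 0 ∨ t = 1 := by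
  by_contra h
  push_neg at h
  have : t ≤ -1 ∨ 2 ≤ t := by omega
  rcases this with h' | h'
  · nlinarith
  · nlinarith


theorem my_open_subset_interior (m : ℤ) (hm : 1 ≤ m) :
    {x : Fin 3 → ℝ | 0 < 1 - (x 0 - x 2 * m / ((m:ℝ)^3+1)) - (x 1 - x 2 * (m:ℝ)^2 / ((m:ℝ)^3+1))
        - x 2 / ((m:ℝ)^3+1) ∧ 0 < x 0 - x 2 * m / ((m:ℝ)^3+1)
        ∧ 0 < x 1 - x 2 * (m:ℝ)^2 / ((m:ℝ)^3+1) ∧ 0 < x 2 / ((m:ℝ)^3+1)}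
      ⊆ interior (tetSet (stdTet m (m^2) (m^3+1))) := by
  have hmR : (1:ℝ) ≤ (m:ℝ) := by exact_mod_cast hm
  have hN : (0:ℝ) < (m:ℝ)^3+1 := by
    nlinarith [mul_nonneg (mul_nonneg (by linarith : (0:ℝ) ≤ (m:ℝ)-1) (by linarith : (0:ℝ) ≤ (m:ℝ))) (by linarith : (0:ℝ) ≤ (m:ℝ)), sq_nonneg (m:ℝ)]
  apply interior_maximal
  · rintro x ⟨h0, h1, h2, h3⟩
    rw [my_mem_tetSet_iff]
    refine ⟨![1 - (x 0 - x 2 * m / ((m:ℝ)^3+1)) - (x 1 - x 2 * (m:ℝ)^2 / ((m:ℝ)^3+1))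
        - x 2 / ((m:ℝ)^3+1), x 0 - x 2 * m / ((m:ℝ)^3+1), x 1 - x 2 * (m:ℝ)^2 / ((m:ℝ)^3+1),
        x 2 / ((m:ℝ)^3+1)], ?_, ?_, ?_⟩
    · intro i; fin_cases i <;> simp <;> linarith
    · simp [Fin.sum_univ_four]; ring
    · funext j
      have hj := Fin.sum_univ_four (fun i => (![1 - (x 0 - x 2 * m / ((m:ℝ)^3+1)) - (x 1 - x 2 * (m:ℝ)^2 / ((m:ℝ)^3+1))
        - x 2 / ((m:ℝ)^3+1), x 0 - x 2 * m / ((m:ℝ)^3+1), x 1 - x 2 * (m:ℝ)^2 / ((m:ℝ)^3+1),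
        x 2 / ((m:ℝ)^3+1)] : Fin 4 → ℝ) i • (stdTet m (m^2) (m^3+1)) i)
      fin_cases j <;>
        simp [Fin.sum_univ_four, stdTet] <;> field_simp <;> ring
  · have c0 : Continuous fun x : Fin 3 → ℝ => x 0 := continuous_apply 0
    have c1 : Continuous fun x : Fin 3 → ℝ => x 1 := continuous_apply 1
    have c2 : Continuous fun x : Fin 3 → ℝ => x 2 := continuous_apply 2
    have g1 : Continuous fun x : Fin 3 → ℝ => x 0 - x 2 * m / ((m:ℝ)^3+1) := by fun_prop
    have g2 : Continuous fun x : Fin 3 → ℝ => x 1 - x 2 * (m:ℝ)^2 / ((m:ℝ)^3+1) := by fun_prop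
    have g3 : Continuous fun x : Fin 3 → ℝ => x 2 / ((m:ℝ)^3+1) := by fun_prop
    have g0 : Continuous fun x : Fin 3 → ℝ => 1 - (x 0 - x 2 * m / ((m:ℝ)^3+1))
        - (x 1 - x 2 * (m:ℝ)^2 / ((m:ℝ)^3+1)) - x 2 / ((m:ℝ)^3+1) := by fun_prop
    rw [Set.setOf_and, Set.setOf_and, Set.setOf_and]
    exact ((isOpen_lt continuous_const g0).inter ((isOpen_lt continuous_const g1).inter
      ((isOpen_lt continuous_const g2).inter (isOpen_lt continuous_const g3))))

theorem my_clean (m : ℤ) (hm : 1 ≤ m) : CleanTet (stdTet m (m ^ 2) (m ^ 3 + 1)) := by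
  intro x hx hlat
  set v := stdTet m (m ^ 2) (m ^ 3 + 1) with hv
  have hmR : (1:ℝ) ≤ (m:ℝ) := by exact_mod_cast hm
  have hN : (0:ℝ) < (m:ℝ)^3+1 := by
    nlinarith [mul_nonneg (mul_nonneg (by linarith : (0:ℝ) ≤ (m:ℝ)-1) (by linarith : (0:ℝ) ≤ (m:ℝ))) (by linarith : (0:ℝ) ≤ (m:ℝ)), sq_nonneg (m:ℝ)]
  have hn0 : (0:ℤ) < m^3+1 := by nlinarith
  have hclosed : IsClosed (tetSet v) := ((Set.finite_range v).isCompact_convexHull (𝕜 := ℝ)).isClosed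
  rw [hclosed.frontier_eq] at hx
  obtain ⟨hxT, hxnI⟩ := hx
  obtain ⟨c, hc0, hcsum, hccomb⟩ := (my_mem_tetSet_iff v x).1 hxT
  -- coordinates
  have e0 : x 0 = c 1 + c 3 * m := by
    have h0 := congrFun hccomb 0
    simp [Fin.sum_univ_four, stdTet, hv] at h0
    rw [← h0]
  have e1 : x 1 = c 2 + c 3 * (m:ℝ)^2 := by
    have h1 := congrFun hccomb 1
    simp [Fin.sum_univ_four, stdTet, hv] at h1
    rw [← h1]
  have e2 : x 2 = c 3 * ((m:ℝ)^3+1) := by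
    have h2 := congrFun hccomb 2
    simp [Fin.sum_univ_four, stdTet, hv] at h2
    rw [← h2]
  choose z hz using hlat
  have hsum4 : c 0 + c 1 + c 2 + c 3 = 1 := by
    rw [Fin.sum_univ_four] at hcsum; linarith
  have hz20 : 0 ≤ z 2 := by
    have : (0:ℝ) ≤ (z 2 : ℝ) := by rw [← hz 2, e2]; exact mul_nonneg (hc0 3) hN.le
    exact_mod_cast this
  have hc3le : c 3 ≤ 1 := by linarith [hc0 0, hc0 1, hc0 2]
  have hz2n : z 2 ≤ m^3+1 := by
    have : (z 2:ℝ) ≤ (m:ℝ)^3+1 := by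
      rw [← hz 2, e2]; nlinarith [hc0 3]
    exact_mod_cast this
  -- helper : if c 3 = 1 then x is the apex
  have hcase3 : c 3 = 1 → x ∈ Set.range v := by
    intro h3
    have hz0 : c 0 = 0 := by nlinarith [hc0 0, hc0 1, hc0 2]
    have hz1 : c 1 = 0 := by nlinarith [hc0 0, hc0 1, hc0 2]
    have hz2 : c 2 = 0 := by nlinarith [hc0 0, hc0 1, hc0 2]
    refine ⟨3, ?_⟩
    funext i
    fin_cases i <;> simp [hv, stdTet] <;> push_cast <;>
      first
      | (rw [e0, hz1, h3]; ring)
      | (rw [e1, hz2, h3]; ring)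
      | (rw [e2, h3]; ring)
  -- helper: z 2 = 0 gives c 3 = 0
  have hz2c3 : z 2 = 0 → c 3 = 0 := by
    intro h
    have h' : c 3 * ((m:ℝ)^3+1) = 0 := by
      rw [← e2, hz 2, h]; norm_num
    rcases mul_eq_zero.1 h' with h'' | h''
    · exact h''
    · linarith
  -- helper: z 2 = m^3+1 gives c 3 = 1
  have hz2c3' : z 2 = m^3+1 → c 3 = 1 := by
    intro h
    have h' : c 3 * ((m:ℝ)^3+1) = (m:ℝ)^3+1 := by
      rw [← e2, hz 2, h]; push_cast; ring
    have := mul_right_cancel₀ (ne_of_gt hN) (h'.trans (one_mul _).symm)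
    exact this
  have hcases : c 0 = 0 ∨ c 1 = 0 ∨ c 2 = 0 ∨ c 3 = 0 := by
    by_contra hcon
    push_neg at hcon
    apply hxnI
    apply my_open_subset_interior m hm
    have g3 : x 2 / ((m:ℝ)^3+1) = c 3 := by rw [e2]; field_simp
    have g1 : x 0 - x 2 * m / ((m:ℝ)^3+1) = c 1 := by rw [e0, e2]; field_simp; ring
    have g2 : x 1 - x 2 * (m:ℝ)^2 / ((m:ℝ)^3+1) = c 2 := by rw [e1, e2]; field_simp; ring
    refine ⟨?_, ?_, ?_, ?_⟩
    · rw [g1, g2, g3]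
      have h' : 1 - c 1 - c 2 - c 3 = c 0 := by linarith
      rw [h']
      exact (hc0 0).lt_of_ne (Ne.symm hcon.1)
    · rw [g1]; exact (hc0 1).lt_of_ne (Ne.symm hcon.2.1)
    · rw [g2]; exact (hc0 2).lt_of_ne (Ne.symm hcon.2.2.1)
    · rw [g3]; exact (hc0 3).lt_of_ne (Ne.symm hcon.2.2.2)
  rcases hcases with hc | hc | hc | hc
  · -- c 0 = 0 : far facet
    have hc12 : c 1 + c 2 + c 3 = 1 := by linarith
    have hreal : ((z 0:ℝ) + z 1 - 1) * ((m:ℝ)^3+1) = (z 2:ℝ) * ((m:ℝ)^2 + m - 1) := by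
      rw [← hz 0, ← hz 1, ← hz 2, e0, e1, e2]
      linear_combination ((m:ℝ)^3+1) * hc12
    have hint : (z 0 + z 1 - 1) * (m^3+1) = z 2 * (m^2 + m - 1) := by exact_mod_cast hreal
    have hdvd : (m^3+1) ∣ z 2 * (m^2 + m - 1) := ⟨z 0 + z 1 - 1, by linarith⟩
    obtain ⟨t, ht⟩ := (my_coprime2 m hm).dvd_of_dvd_mul_right hdvd
    rcases my_t01 hn0 (by rw [← ht]; exact hz20) (by rw [← ht]; exact hz2n) with ht0 | ht1
    · -- z 2 = 0
      have hz2 : z 2 = 0 := by rw [ht, ht0, mul_zero]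
      have hc3 : c 3 = 0 := hz2c3 hz2
      have hz0c : (z 0:ℝ) = c 1 := by rw [← hz 0, e0, hc3]; ring
      have hz1c : (z 1:ℝ) = c 2 := by rw [← hz 1, e1, hc3]; ring
      have hb0 : 0 ≤ z 0 := by exact_mod_cast hz0c ▸ hc0 1
      have hb1 : 0 ≤ z 1 := by exact_mod_cast hz1c ▸ hc0 2
      have hb2 : z 0 + z 1 = 1 := by
        have : (z 0:ℝ) + z 1 = 1 := by rw [hz0c, hz1c]; linarith
        exact_mod_cast this
      have : z 0 = 1 ∧ z 1 = 0 ∨ z 0 = 0 ∧ z 1 = 1 := by omega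
      rcases this with ⟨ha, hb⟩ | ⟨ha, hb⟩
      · refine ⟨1, ?_⟩
        funext i
        fin_cases i <;> simp [hv, stdTet] <;>
          first
          | (rw [hz 0, ha]; norm_num)
          | (rw [hz 1, hb]; norm_num)
          | (rw [hz 2, hz2]; norm_num)
      · refine ⟨2, ?_⟩
        funext i
        fin_cases i <;> simp [hv, stdTet] <;>
          first
          | (rw [hz 0, ha]; norm_num)
          | (rw [hz 1, hb]; norm_num)
          | (rw [hz 2, hz2]; norm_num)
    · exact hcase3 (hz2c3' (by rw [ht, ht1, mul_one]))
  · -- c 1 = 0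
    have hreal : (z 0:ℝ) * ((m:ℝ)^3+1) = (z 2:ℝ) * m := by
      rw [← hz 0, ← hz 2, e0, e2, hc]; ring
    have hint : z 0 * (m^3+1) = z 2 * m := by exact_mod_cast hreal
    have hdvd : (m^3+1) ∣ z 2 * m := ⟨z 0, by linarith⟩
    obtain ⟨t, ht⟩ := (my_coprime1 m).dvd_of_dvd_mul_right hdvd
    rcases my_t01 hn0 (by rw [← ht]; exact hz20) (by rw [← ht]; exact hz2n) with ht0 | ht1
    · have hz2 : z 2 = 0 := by rw [ht, ht0, mul_zero]
      have hc3 : c 3 = 0 := hz2c3 hz2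
      have hz0c : z 0 = 0 := by
        have : (z 0:ℝ) = 0 := by rw [← hz 0, e0, hc, hc3]; ring
        exact_mod_cast this
      have hz1c : (z 1:ℝ) = c 2 := by rw [← hz 1, e1, hc3]; ring
      have hb1 : 0 ≤ z 1 := by exact_mod_cast hz1c ▸ hc0 2
      have hb2 : z 1 ≤ 1 := by
        have : (z 1:ℝ) ≤ 1 := by rw [hz1c]; linarith [hc0 0, hc0 1]
        exact_mod_cast this
      have : z 1 = 0 ∨ z 1 = 1 := by omega
      rcases this with hb | hb
      · refine ⟨0, ?_⟩
        funext i
        fin_cases i <;> simp [hv, stdTet] <;>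
          first
          | (rw [hz 0, hz0c]; norm_num)
          | (rw [hz 1, hb]; norm_num)
          | (rw [hz 2, hz2]; norm_num)
      · refine ⟨2, ?_⟩
        funext i
        fin_cases i <;> simp [hv, stdTet] <;>
          first
          | (rw [hz 0, hz0c]; norm_num)
          | (rw [hz 1, hb]; norm_num)
          | (rw [hz 2, hz2]; norm_num)
    · exact hcase3 (hz2c3' (by rw [ht, ht1, mul_one]))
  · -- c 2 = 0
    have hreal : (z 1:ℝ) * ((m:ℝ)^3+1) = (z 2:ℝ) * (m:ℝ)^2 := by
      rw [← hz 1, ← hz 2, e1, e2, hc]; ring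
    have hint : z 1 * (m^3+1) = z 2 * m^2 := by exact_mod_cast hreal
    have hdvd : (m^3+1) ∣ z 2 * m^2 := ⟨z 1, by linarith⟩
    obtain ⟨t, ht⟩ := ((my_coprime1 m).pow_right (n := 2)).dvd_of_dvd_mul_right hdvd
    rcases my_t01 hn0 (by rw [← ht]; exact hz20) (by rw [← ht]; exact hz2n) with ht0 | ht1
    · have hz2 : z 2 = 0 := by rw [ht, ht0, mul_zero]
      have hc3 : c 3 = 0 := hz2c3 hz2
      have hz1c : z 1 = 0 := by
        have : (z 1:ℝ) = 0 := by rw [← hz 1, e1, hc, hc3]; ring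
        exact_mod_cast this
      have hz0c : (z 0:ℝ) = c 1 := by rw [← hz 0, e0, hc3]; ring
      have hb0 : 0 ≤ z 0 := by exact_mod_cast hz0c ▸ hc0 1
      have hb2 : z 0 ≤ 1 := by
        have : (z 0:ℝ) ≤ 1 := by rw [hz0c]; linarith [hc0 0, hc0 2]
        exact_mod_cast this
      have : z 0 = 0 ∨ z 0 = 1 := by omega
      rcases this with hb | hb
      · refine ⟨0, ?_⟩
        funext i
        fin_cases i <;> simp [hv, stdTet] <;>
          first
          | (rw [hz 0, hb]; norm_num)
          | (rw [hz 1, hz1c]; norm_num)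
          | (rw [hz 2, hz2]; norm_num)
      · refine ⟨1, ?_⟩
        funext i
        fin_cases i <;> simp [hv, stdTet] <;>
          first
          | (rw [hz 0, hb]; norm_num)
          | (rw [hz 1, hz1c]; norm_num)
          | (rw [hz 2, hz2]; norm_num)
    · exact hcase3 (hz2c3' (by rw [ht, ht1, mul_one]))
  · -- c 3 = 0
    have hz0c : (z 0:ℝ) = c 1 := by rw [← hz 0, e0, hc]; ring
    have hz1c : (z 1:ℝ) = c 2 := by rw [← hz 1, e1, hc]; ring
    have hz2 : z 2 = 0 := by
      have : (z 2:ℝ) = 0 := by rw [← hz 2, e2, hc]; ring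
      exact_mod_cast this
    have hb0 : 0 ≤ z 0 := by exact_mod_cast hz0c ▸ hc0 1
    have hb1 : 0 ≤ z 1 := by exact_mod_cast hz1c ▸ hc0 2
    have hb2 : z 0 + z 1 ≤ 1 := by
      have : (z 0:ℝ) + z 1 ≤ 1 := by rw [hz0c, hz1c]; linarith [hc0 0]
      exact_mod_cast this
    have : z 0 = 0 ∧ z 1 = 0 ∨ z 0 = 1 ∧ z 1 = 0 ∨ z 0 = 0 ∧ z 1 = 1 := by omega
    rcases this with ⟨ha, hb⟩ | ⟨ha, hb⟩ | ⟨ha, hb⟩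
    · refine ⟨0, ?_⟩
      funext i
      fin_cases i <;> simp [hv, stdTet] <;>
        first
        | (rw [hz 0, ha]; norm_num)
        | (rw [hz 1, hb]; norm_num)
        | (rw [hz 2, hz2]; norm_num)
    · refine ⟨1, ?_⟩
      funext i
      fin_cases i <;> simp [hv, stdTet] <;>
        first
        | (rw [hz 0, ha]; norm_num)
        | (rw [hz 1, hb]; norm_num)
        | (rw [hz 2, hz2]; norm_num)
    · refine ⟨2, ?_⟩
      funext i
      fin_cases i <;> simp [hv, stdTet] <;>
        first
        | (rw [hz 0, ha]; norm_num)
        | (rw [hz 1, hb]; norm_num)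
        | (rw [hz 2, hz2]; norm_num)

theorem my_F_linear (u : Fin 3 → ℤ) :
    IsLinearMap ℝ (fun x : Fin 3 → ℝ => ∑ i, (u i : ℝ) * x i) := by
  constructor
  · intro x y
    simp [mul_add, Finset.sum_add_distrib]
  · intro c x
    simp [Finset.mul_sum]
    congr 1
    funext i
    ring

theorem my_F_cont (u : Fin 3 → ℤ) :
    Continuous (fun x : Fin 3 → ℝ => ∑ i, (u i : ℝ) * x i) := by
  apply continuous_finset_sum
  intro i _
  exact continuous_const.mul (continuous_apply i)

theorem my_le_sSup (v : Fin 4 → Fin 3 → ℝ) (u : Fin 3 → ℤ) (j : Fin 4) :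
    (∑ i, (u i : ℝ) * v j i) ≤ sSup ((fun x => ∑ i, (u i : ℝ) * x i) '' tetSet v) := by
  apply le_csSup
  · exact (((Set.finite_range v).isCompact_convexHull (𝕜 := ℝ)).image (my_F_cont u)).bddAbove
  · exact ⟨v j, subset_convexHull ℝ _ ⟨j, rfl⟩, rfl⟩

theorem my_sInf_le (v : Fin 4 → Fin 3 → ℝ) (u : Fin 3 → ℤ) (j : Fin 4) :
    sInf ((fun x => ∑ i, (u i : ℝ) * x i) '' tetSet v) ≤ (∑ i, (u i : ℝ) * v j i) := by
  apply csInf_le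
  · exact (((Set.finite_range v).isCompact_convexHull (𝕜 := ℝ)).image (my_F_cont u)).bddBelow
  · exact ⟨v j, subset_convexHull ℝ _ ⟨j, rfl⟩, rfl⟩

theorem my_key_int (m : ℤ) (hm : 1 ≤ m) (u : Fin 3 → ℤ) (hu : u ≠ 0) :
    ∃ j k : Fin 4, m ≤ (![0, u 0, u 1, u 0 * m + u 1 * m^2 + u 2 * (m^3+1)] : Fin 4 → ℤ) j -
      (![0, u 0, u 1, u 0 * m + u 1 * m^2 + u 2 * (m^3+1)] : Fin 4 → ℤ) k := by
  by_contra h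
  push_neg at h
  have h10 := h 1 0
  have h01 := h 0 1
  have h20 := h 2 0
  have h02 := h 0 2
  have h30 := h 3 0
  have h03 := h 0 3
  simp only [Matrix.cons_val_zero, Matrix.cons_val_one, Matrix.head_cons,
    Matrix.cons_val_two, Matrix.tail_cons, Matrix.cons_val_three] at h10 h01 h20 h02 h30 h03
  set a := u 0 with ha
  set b := u 1 with hb
  set c := u 2 with hc
  have ha1 : -(m-1) ≤ a := by omega
  have ha2 : a ≤ m-1 := by omega
  have hb1 : -(m-1) ≤ b := by omega
  have hb2 : b ≤ m-1 := by omega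
  have hs1 : -(m-1) ≤ a*m + b*m^2 + c*(m^3+1) := by omega
  have hs2 : a*m + b*m^2 + c*(m^3+1) ≤ m-1 := by omega
  have hm0 : (0:ℤ) ≤ m := by omega
  have hm20 : (0:ℤ) ≤ m^2 := sq_nonneg m
  have hn0 : (0:ℤ) ≤ m^3+1 := by nlinarith
  have hc0 : c = 0 := by
    rcases lt_trichotomy c 0 with hlt | heq | hgt
    · exfalso
      have h1 : c ≤ -1 := by omega
      nlinarith [mul_le_mul_of_nonneg_right ha1 hm0, mul_le_mul_of_nonneg_right hb1 hm20,
        mul_le_mul_of_nonneg_right h1 hn0]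
    · exact heq
    · exfalso
      have h1 : 1 ≤ c := by omega
      nlinarith [mul_le_mul_of_nonneg_right ha2 hm0, mul_le_mul_of_nonneg_right hb2 hm20,
        mul_le_mul_of_nonneg_right h1 hn0]
  rw [hc0] at hs1 hs2
  have hb0 : b = 0 := by
    rcases lt_trichotomy b 0 with hlt | heq | hgt
    · exfalso
      have h1 : b ≤ -1 := by omega
      nlinarith [mul_le_mul_of_nonneg_right ha1 hm0, mul_le_mul_of_nonneg_right h1 hm20]
    · exact heq
    · exfalso
      have h1 : 1 ≤ b := by omega
      nlinarith [mul_le_mul_of_nonneg_right ha2 hm0, mul_le_mul_of_nonneg_right h1 hm20]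
  rw [hb0] at hs1 hs2
  have ha0 : a = 0 := by
    rcases lt_trichotomy a 0 with hlt | heq | hgt
    · exfalso
      have h1 : a ≤ -1 := by omega
      nlinarith [mul_le_mul_of_nonneg_right h1 hm0]
    · exact heq
    · exfalso
      have h1 : 1 ≤ a := by omega
      nlinarith [mul_le_mul_of_nonneg_right h1 hm0]
  apply hu
  funext i
  fin_cases i
  · exact ha0
  · exact hb0
  · exact hc0

theorem my_vals (m : ℤ) (u : Fin 3 → ℤ) (l : Fin 4) :
    (∑ i, (u i : ℝ) * (stdTet m (m^2) (m^3+1)) l i) =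
      ((![0, u 0, u 1, u 0 * m + u 1 * m^2 + u 2 * (m^3+1)] : Fin 4 → ℤ) l : ℝ) := by
  fin_cases l <;> simp [stdTet, Fin.sum_univ_three] <;> push_cast <;> ring

theorem my_width_lb (m : ℤ) (hm : 1 ≤ m) (u : Fin 3 → ℤ) (hu : u ≠ 0) :
    (m:ℝ) ≤ uWidth (tetSet (stdTet m (m^2) (m^3+1))) u := by
  obtain ⟨j, k, hjk⟩ := my_key_int m hm u hu
  have h1 := my_le_sSup (stdTet m (m^2) (m^3+1)) u j
  have h2 := my_sInf_le (stdTet m (m^2) (m^3+1)) u k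
  rw [my_vals m u j] at h1
  rw [my_vals m u k] at h2
  have hcast : (m:ℝ) ≤ ((![0, u 0, u 1, u 0 * m + u 1 * m^2 + u 2 * (m^3+1)] : Fin 4 → ℤ) j : ℝ) -
      ((![0, u 0, u 1, u 0 * m + u 1 * m^2 + u 2 * (m^3+1)] : Fin 4 → ℤ) k : ℝ) := by
    rw [← Int.cast_sub]
    exact_mod_cast hjk
  unfold uWidth
  linarith

theorem my_width_e1 (m : ℤ) (hm : 1 ≤ m) :
    uWidth (tetSet (stdTet m (m^2) (m^3+1))) ![1,0,0] = (m:ℝ) := by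
  have hmR : (1:ℝ) ≤ (m:ℝ) := by exact_mod_cast hm
  set v := stdTet m (m^2) (m^3+1) with hv
  have hFv : ∀ l : Fin 4, (∑ i, ((![1,0,0] : Fin 3 → ℤ) i : ℝ) * v l i) = (![0,1,0,(m:ℝ)] l) := by
    intro l
    fin_cases l <;> simp [hv, stdTet, Fin.sum_univ_three]
  have hgreat : IsGreatest ((fun x => ∑ i, ((![1,0,0] : Fin 3 → ℤ) i : ℝ) * x i) '' tetSet v) (m:ℝ) := by
    constructor
    · exact ⟨v 3, subset_convexHull ℝ _ ⟨3, rfl⟩, hFv 3⟩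
    · rintro y ⟨x, hx, rfl⟩
      have hsub : tetSet v ⊆ {z : Fin 3 → ℝ | (∑ i, ((![1,0,0] : Fin 3 → ℤ) i : ℝ) * z i) ≤ (m:ℝ)} := by
        apply convexHull_min
        · rintro _ ⟨l, rfl⟩
          show (∑ i, ((![1,0,0] : Fin 3 → ℤ) i : ℝ) * v l i) ≤ (m:ℝ)
          rw [hFv l]
          fin_cases l <;> simp <;> linarith
        · exact convex_halfSpace_le (my_F_linear _) _
      exact hsub hx
  have hleast : IsLeast ((fun x => ∑ i, ((![1,0,0] : Fin 3 → ℤ) i : ℝ) * x i) '' tetSet v) 0 := by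
    constructor
    · exact ⟨v 0, subset_convexHull ℝ _ ⟨0, rfl⟩, hFv 0⟩
    · rintro y ⟨x, hx, rfl⟩
      have hsub : tetSet v ⊆ {z : Fin 3 → ℝ | (0:ℝ) ≤ ∑ i, ((![1,0,0] : Fin 3 → ℤ) i : ℝ) * z i} := by
        apply convexHull_min
        · rintro _ ⟨l, rfl⟩
          show (0:ℝ) ≤ ∑ i, ((![1,0,0] : Fin 3 → ℤ) i : ℝ) * v l i
          rw [hFv l]
          fin_cases l <;> simp <;> linarith
        · exact convex_halfSpace_ge (my_F_linear _) _
      exact hsub hx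
  unfold uWidth
  rw [hgreat.csSup_eq, hleast.csInf_eq]
  ring

theorem my_lattice_width (m : ℤ) (hm : 1 ≤ m) :
    latticeWidth (tetSet (stdTet m (m^2) (m^3+1))) = (m:ℝ) := by
  have hne : (![1,0,0] : Fin 3 → ℤ) ≠ 0 := by
    intro h
    have := congrFun h 0
    simp at this
  have hmem : (m:ℝ) ∈ {w : ℝ | ∃ u : Fin 3 → ℤ, u ≠ 0 ∧ uWidth (tetSet (stdTet m (m^2) (m^3+1))) u = w} :=
    ⟨![1,0,0], hne, my_width_e1 m hm⟩
  have hlb : ∀ w ∈ {w : ℝ | ∃ u : Fin 3 → ℤ, u ≠ 0 ∧ uWidth (tetSet (stdTet m (m^2) (m^3+1))) u = w},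
      (m:ℝ) ≤ w := by
    rintro w ⟨u, hu, rfl⟩
    exact my_width_lb m hm u hu
  unfold latticeWidth
  exact le_antisymm (csInf_le ⟨(m:ℝ), hlb⟩ hmem) (le_csInf ⟨_, hmem⟩ hlb)

theorem my_lattice_tet (m : ℤ) (hm : 1 ≤ m) : IsLatticeTet (stdTet m (m ^ 2) (m ^ 3 + 1)) := by
  have hmR : (1:ℝ) ≤ (m:ℝ) := by exact_mod_cast hm
  have hN : (0:ℝ) < (m:ℝ)^3+1 := by
    nlinarith [mul_nonneg (mul_nonneg (by linarith : (0:ℝ) ≤ (m:ℝ)-1) (by linarith : (0:ℝ) ≤ (m:ℝ))) (by linarith : (0:ℝ) ≤ (m:ℝ)), sq_nonneg (m:ℝ)]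
  constructor
  · intro j i
    fin_cases j <;> fin_cases i
    · exact ⟨0, by norm_num [stdTet]⟩
    · exact ⟨0, by norm_num [stdTet]⟩
    · exact ⟨0, by norm_num [stdTet]⟩
    · exact ⟨1, by norm_num [stdTet]⟩
    · exact ⟨0, by norm_num [stdTet]⟩
    · exact ⟨0, by norm_num [stdTet]⟩
    · exact ⟨0, by norm_num [stdTet]⟩
    · exact ⟨1, by norm_num [stdTet]⟩
    · exact ⟨0, by norm_num [stdTet]⟩
    · exact ⟨m, by norm_num [stdTet]⟩
    · exact ⟨m^2, by norm_num [stdTet]⟩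
    · exact ⟨m^3+1, by norm_num [stdTet]⟩
  · rw [affineIndependent_iff_of_fintype]
    intro w hw hvs
    rw [Finset.weightedVSub_eq_linear_combination _ hw] at hvs
    have h0 := congrFun hvs 0
    have h1 := congrFun hvs 1
    have h2 := congrFun hvs 2
    simp [Fin.sum_univ_four, stdTet] at h0 h1 h2
    have hw3 : w 3 = 0 := by
      rcases h2 with h | h
      · exact h
      · exfalso; nlinarith
    have hw1 : w 1 = 0 := by nlinarith [h0]
    have hw2 : w 2 = 0 := by nlinarith [h1]
    have hw0 : w 0 = 0 := by
      rw [Fin.sum_univ_four] at hw; linarith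
    intro i
    fin_cases i
    · exact hw0
    · exact hw1
    · exact hw2
    · exact hw3

end aux

theorem stmt19 (m : ℤ) (hm : 1 ≤ m) :
    IsLatticeTet (stdTet m (m ^ 2) (m ^ 3 + 1)) ∧
      CleanTet (stdTet m (m ^ 2) (m ^ 3 + 1)) ∧
      latticeWidth (tetSet (stdTet m (m ^ 2) (m ^ 3 + 1))) = (m : ℝ) :=
  ⟨my_lattice_tet m hm, my_clean m hm, my_lattice_width m hm⟩
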